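/- Let A ⊂ ℤ² be finite nonempty with ℓ₁, ℓ₂ as above. On the free ℂ-vector space V with basis {p_{n,i} : (n,i) ∈ ℤ² × ℤ}, define a ℂ-bilinear product by p_{n,i} · p_{n',i'} = Σ_{j=0}^{ℓ₂(n,n')} binom(ℓ₂(n,n'), j) p_{n+n', i+i'+j}. Then this product is associative and commutative with unit p_{0,0}. -/

import Mathlib

/-!
Fix `α ∈ A`. Then `m(n) = ℓ₁(n) - ⟨n, α⟩` is a nonnegative function with
`m(n) + m(n') = m(n + n') + ℓ₂(n, n')`, since `⟨·, α⟩` is linear. Consequently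
`p_{n,i} ↦ t^i (1 + t)^{m(n)} e_n` turns the product into multiplication in the group algebra
`ℂ[t, t⁻¹][ℤ²]`: the binomial theorem expands the surplus factor `(1 + t)^{ℓ₂(n, n')}` into
`Σ_j binom(ℓ₂, j) t^j`. This map is injective because `ℂ[t, t⁻¹]` is a domain, and it sends
`p_{0,0}` to `1`, so associativity, commutativity and the unit laws are inherited from the
group algebra.
-/

/-- `ℓ₁(n) = max_{α ∈ A} ⟨n, α⟩`. -/
def ell1 (A : Finset (ℤ × ℤ)) (hA : A.Nonempty) (n : ℤ × ℤ) : ℤ :=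
  A.sup' hA (fun α => n.1 * α.1 + n.2 * α.2)

/-- `ℓ₂(n, n') = ℓ₁(n) + ℓ₁(n') − ℓ₁(n + n')`. -/
def ell2 (A : Finset (ℤ × ℤ)) (hA : A.Nonempty) (n n' : ℤ × ℤ) : ℤ :=
  ell1 A hA n + ell1 A hA n' - ell1 A hA (n + n')

/-- The ℂ-bilinear product on the free vector space with basis `{p_{n,i}}` (realized as
finitely supported functions `((ℤ × ℤ) × ℤ) →₀ ℂ`, with `p_{n,i} = single (n,i) 1`),
determined on basis elements by
`p_{n,i} · p_{n',i'} = Σ_{j=0}^{ℓ₂(n,n')} binom(ℓ₂(n,n'), j) p_{n+n', i+i'+j}`. -/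
noncomputable def mulV (A : Finset (ℤ × ℤ)) (hA : A.Nonempty)
    (f g : ((ℤ × ℤ) × ℤ) →₀ ℂ) : ((ℤ × ℤ) × ℤ) →₀ ℂ :=
  f.sum fun k c => g.sum fun k' c' =>
    ∑ j ∈ Finset.range ((ell2 A hA k.1 k'.1).toNat + 1),
      (c * c' * ((ell2 A hA k.1 k'.1).toNat.choose j : ℂ)) •
        Finsupp.single (k.1 + k'.1, k.2 + k'.2 + (j : ℤ)) (1 : ℂ)

open LaurentPolynomial

namespace WrappedFloer

section ell1

variable {A : Finset (ℤ × ℤ)} (hA : A.Nonempty)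

lemma pairing_le_ell1 {α : ℤ × ℤ} (hα : α ∈ A) (n : ℤ × ℤ) :
    n.1 * α.1 + n.2 * α.2 ≤ ell1 A hA n :=
  Finset.le_sup' (fun α : ℤ × ℤ => n.1 * α.1 + n.2 * α.2) hα

lemma ell1_zero : ell1 A hA 0 = 0 := by
  simp [ell1]

lemma ell1_add_le (n n' : ℤ × ℤ) : ell1 A hA (n + n') ≤ ell1 A hA n + ell1 A hA n' :=
  Finset.sup'_le _ _ fun α hα => by
    have := add_le_add (pairing_le_ell1 hA hα n) (pairing_le_ell1 hA hα n')
    simp only [Prod.fst_add, Prod.snd_add]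
    linarith

/-- `ℓ₁ - ⟨·, α⟩`, which is nonnegative for `α ∈ A`, so `toNat` loses nothing there. -/
noncomputable def shiftedEll1 (α n : ℤ × ℤ) : ℕ :=
  (ell1 A hA n - (n.1 * α.1 + n.2 * α.2)).toNat

lemma shiftedEll1_zero (α : ℤ × ℤ) : shiftedEll1 hA α 0 = 0 := by
  simp [shiftedEll1, ell1_zero]

lemma shiftedEll1_add {α : ℤ × ℤ} (hα : α ∈ A) (n n' : ℤ × ℤ) :
    shiftedEll1 hA α n + shiftedEll1 hA α n'
      = shiftedEll1 hA α (n + n') + (ell2 A hA n n').toNat := by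
  have hn := pairing_le_ell1 hA hα n
  have hn' := pairing_le_ell1 hA hα n'
  have hnn' := pairing_le_ell1 hA hα (n + n')
  have hsub := ell1_add_le hA n n'
  simp only [Prod.fst_add, Prod.snd_add] at hnn'
  simp only [shiftedEll1, ell2, Prod.fst_add, Prod.snd_add]
  lia

end ell1

section Laurent

variable {R : Type*} [CommSemiring R]

lemma one_add_T_one_pow (L : ℕ) :
    (1 + T 1 : R[T;T⁻¹]) ^ L = ∑ j ∈ Finset.range (L + 1), (L.choose j : R) • T (j : ℤ) := by
  rw [add_comm, add_pow]
  refine Finset.sum_congr rfl fun j _ => ?_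
  rw [one_pow, mul_one, T_pow, mul_one, Nat.cast_smul_eq_nsmul, nsmul_eq_mul, mul_comm]

lemma one_add_T_one_ne_zero [Nontrivial R] : (1 + T 1 : R[T;T⁻¹]) ≠ 0 := by
  rw [← Polynomial.toLaurent_X, ← map_one Polynomial.toLaurent, ← map_add,
    Polynomial.toLaurent_ne_zero]
  simpa [add_comm] using Polynomial.X_add_C_ne_zero (1 : R)

end Laurent

section Model

variable {A : Finset (ℤ × ℤ)} (hA : A.Nonempty) (α : ℤ × ℤ)

noncomputable def modelGen (k : (ℤ × ℤ) × ℤ) : AddMonoidAlgebra ℂ[T;T⁻¹] (ℤ × ℤ) :=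
  AddMonoidAlgebra.single k.1 (T k.2 * (1 + T 1) ^ shiftedEll1 hA α k.1)

lemma modelGen_mul {α : ℤ × ℤ} (hα : α ∈ A) (k k' : (ℤ × ℤ) × ℤ) :
    modelGen hA α k * modelGen hA α k'
      = ∑ j ∈ Finset.range ((ell2 A hA k.1 k'.1).toNat + 1),
          ((ell2 A hA k.1 k'.1).toNat.choose j : ℂ) •
            modelGen hA α (k.1 + k'.1, k.2 + k'.2 + (j : ℤ)) := by
  set L := (ell2 A hA k.1 k'.1).toNat
  have hcoeff : (T k.2 : ℂ[T;T⁻¹]) * (1 + T 1) ^ shiftedEll1 hA α k.1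
        * (T k'.2 * (1 + T 1) ^ shiftedEll1 hA α k'.1)
      = T (k.2 + k'.2) * (1 + T 1) ^ shiftedEll1 hA α (k.1 + k'.1) * (1 + T 1) ^ L := by
    rw [T_add, mul_assoc _ _ ((1 + T 1) ^ L), ← pow_add, ← shiftedEll1_add hA hα, pow_add]
    ring
  rw [modelGen, modelGen, AddMonoidAlgebra.single_mul_single, hcoeff,
    ← AddMonoidAlgebra.lsingle_apply (R := ℂ), one_add_T_one_pow L, Finset.mul_sum, map_sum]
  refine Finset.sum_congr rfl fun j _ => ?_
  rw [mul_smul_comm, map_smul, AddMonoidAlgebra.lsingle_apply, modelGen, T_add (_ + _)]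
  congr 2
  ring

lemma linearIndependent_modelGen : LinearIndependent ℂ (modelGen hA α) := by
  have hfiber (n : ℤ × ℤ) :
      LinearIndependent ℂ fun i : ℤ => (T i : ℂ[T;T⁻¹]) * (1 + T 1) ^ shiftedEll1 hA α n :=
    (AddMonoidAlgebra.basis ℤ ℂ).linearIndependent.map' (LinearMap.mulRight ℂ _)
      (LinearMap.ker_eq_bot.mpr (mul_left_injective₀ (pow_ne_zero _ one_add_T_one_ne_zero)))
  exact ((Finsupp.linearIndependent_single _ hfiber).map'
    (AddMonoidAlgebra.coeffLinearEquiv ℂ).symm.toLinearMap (LinearEquiv.ker _)).comp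
      (Equiv.sigmaEquivProd _ _).symm (Equiv.injective _)

lemma linearCombination_modelGen_mulV {α : ℤ × ℤ} (hα : α ∈ A) (f g : ((ℤ × ℤ) × ℤ) →₀ ℂ) :
    Finsupp.linearCombination ℂ (modelGen hA α) (mulV A hA f g)
      = Finsupp.linearCombination ℂ (modelGen hA α) f
          * Finsupp.linearCombination ℂ (modelGen hA α) g := by
  simp only [mulV, map_finsuppSum, map_sum, map_smul, Finsupp.linearCombination_single, one_smul]
  rw [Finsupp.linearCombination_apply, Finsupp.linearCombination_apply, Finsupp.sum_mul]
  simp only [Finsupp.mul_sum, smul_mul_smul_comm, modelGen_mul hA hα, Finset.smul_sum, smul_smul]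

lemma linearCombination_modelGen_unit :
    Finsupp.linearCombination ℂ (modelGen hA α) (Finsupp.single ((0, 0), 0) 1) = 1 := by
  simp only [Finsupp.linearCombination_single, one_smul, modelGen, Prod.mk_zero_zero,
    Prod.fst_zero, Prod.snd_zero, shiftedEll1_zero, pow_zero, mul_one, T_zero]
  exact AddMonoidAlgebra.one_def.symm

end Model

end WrappedFloer

/-- The product `mulV` is associative and commutative with unit `p_{0,0}`. -/
theorem stmt5 (A : Finset (ℤ × ℤ)) (hA : A.Nonempty) :
    (∀ f g h : ((ℤ × ℤ) × ℤ) →₀ ℂ,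
      mulV A hA (mulV A hA f g) h = mulV A hA f (mulV A hA g h)) ∧
    (∀ f g : ((ℤ × ℤ) × ℤ) →₀ ℂ, mulV A hA f g = mulV A hA g f) ∧
    (∀ f : ((ℤ × ℤ) × ℤ) →₀ ℂ,
      mulV A hA (Finsupp.single ((0, 0), 0) (1 : ℂ)) f = f ∧
      mulV A hA f (Finsupp.single ((0, 0), 0) (1 : ℂ)) = f) := by
  obtain ⟨α, hα⟩ := id hA
  have hinj : Function.Injective (Finsupp.linearCombination ℂ (WrappedFloer.modelGen hA α)) :=
    WrappedFloer.linearIndependent_modelGen hA α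
  have hmul := WrappedFloer.linearCombination_modelGen_mulV hA hα
  have hone := WrappedFloer.linearCombination_modelGen_unit hA α
  refine ⟨fun f g h => hinj ?_, fun f g => hinj ?_, fun f => ⟨hinj ?_, hinj ?_⟩⟩
  · rw [hmul, hmul, hmul, hmul, mul_assoc]
  · rw [hmul, hmul, mul_comm]
  · rw [hmul, hone, one_mul]
  · rw [hmul, hone, mul_one]
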